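/- arXiv:1302.5567 — 2 statements merged into one kernel-verified Lean document; each statement's English description precedes it below -/
import Mathlib

section
/- Let n ≥ 3, 0 < α < n, and p, q > 0 with pq > 1 and p ≤ q. If 1/(p+1) + 1/(q+1) ≤ (n-α)/n, then q - (qα/n)·((p+1)(q-1)/(pq-1)) - α/n > α(q-p)/(n(pq-1)). -/
/-!
Put `t = α (p+1)(q+1) / (n (pq-1))`. The non-subcritical condition says exactly `t ≤ 1`, and the
difference of the two sides simplifies to `q - t (q-1) = (1-t) q + t`, a convex combination of the
positive numbers `q` and `1`.
-/

lemma one_div_add_one_div_le_sub_div_iff {a b n α : ℝ} (ha : 0 < a) (hb : 0 < b) (hn : 0 < n) :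
    1 / a + 1 / b ≤ (n - α) / n ↔ α * (a * b) ≤ n * (a * b - a - b) := by
  rw [div_add_div _ _ ha.ne' hb.ne', div_le_div_iff₀ (by positivity) hn]
  constructor <;> intro h <;> linarith

lemma sub_mul_div_sub_div_eq {n α p q : ℝ} (hn : n ≠ 0) (hpq : p * q - 1 ≠ 0) :
    q - (q * α / n) * ((p + 1) * (q - 1) / (p * q - 1)) - α / n - α * (q - p) / (n * (p * q - 1))
      = q - α * ((p + 1) * (q + 1)) / (n * (p * q - 1)) * (q - 1) := by
  -- otherwise `field_simp` normalizes `p * q - 1` to a form it no longer knows to be nonzero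
  generalize hD : p * q - 1 = D at hpq ⊢
  field_simp
  rw [← hD]
  ring

theorem stmt3_general (n α p q : ℝ) (hn : 3 ≤ n) (hα : 0 < α)
    (hp : 0 < p) (hq : 0 < q) (hpq : 1 < p * q)
    (hncc : 1 / (p + 1) + 1 / (q + 1) ≤ (n - α) / n) :
    q - (q * α / n) * ((p + 1) * (q - 1) / (p * q - 1)) - α / n
      > α * (q - p) / (n * (p * q - 1)) := by
  have hn₀ : 0 < n := by linarith
  have hD : 0 < p * q - 1 := by linarith
  have hcond : α * ((p + 1) * (q + 1)) ≤ n * (p * q - 1) := by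
    have h := (one_div_add_one_div_le_sub_div_iff (by linarith) (by linarith) hn₀).1 hncc
    linarith
  set t := α * ((p + 1) * (q + 1)) / (n * (p * q - 1))
  have ht₀ : 0 < t := by positivity
  have ht₁ : t ≤ 1 := (div_le_one (by positivity)).2 hcond
  rw [gt_iff_lt, ← sub_pos, sub_mul_div_sub_div_eq hn₀.ne' hD.ne']
  have hmix : 0 ≤ (1 - t) * q := mul_nonneg (sub_nonneg.2 ht₁) hq.le
  linarith

theorem stmt3 (n α p q : ℝ) (hn : 3 ≤ n) (hα : 0 < α) (hαn : α < n)
    (hp : 0 < p) (hq : 0 < q) (hpq : 1 < p * q) (hple : p ≤ q)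
    (hncc : 1 / (p + 1) + 1 / (q + 1) ≤ (n - α) / n) :
    q - (q * α / n) * ((p + 1) * (q - 1) / (p * q - 1)) - α / n
      > α * (q - p) / (n * (p * q - 1)) :=
  stmt3_general n α p q hn hα hp hq hpq hncc
end

section
/- Let n ≥ 3, 0 < α < n, p > 0, and suppose (n-α)p < n, n - α < n, and (n-α)(p+1) > n. Then the integral ∫_{ℝⁿ} |z|^{-(n-α)p} |e - z|^{-(n-α)} dz is finite, where e is any fixed unit vector in ℝⁿ. -/
/-!
Near `0` the integrand behaves like `‖z‖ ^ a` and near `e` like `‖e - z‖ ^ b`, both locally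
integrable since the exponents exceed `-n`; at infinity it decays like `‖z‖ ^ (a + b)`, integrable
since `a + b < -n`. Here `a = -(n - α) p` and `b = α - n`.
-/

open MeasureTheory Metric Module Set

lemma measurable_rpow_norm_mul_rpow_norm_sub {E : Type*} [NormedAddCommGroup E]
    [MeasurableSpace E] [BorelSpace E] (a b : ℝ) (e : E) :
    Measurable fun z : E ↦ ‖z‖ ^ a * ‖e - z‖ ^ b := by
  fun_prop

variable {E : Type*} [NormedAddCommGroup E] [NormedSpace ℝ E] [FiniteDimensional ℝ E]
  [MeasurableSpace E] [BorelSpace E] {μ : Measure E} [μ.IsAddHaarMeasure]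
  {a b : ℝ} {e : E}

lemma integrableOn_ball_zero_rpow_norm_mul_rpow_norm_sub (ha : -(finrank ℝ E : ℝ) < a)
    (hb : b ≤ 0) (he : ‖e‖ = 1) :
    IntegrableOn (fun z ↦ ‖z‖ ^ a * ‖e - z‖ ^ b) (ball 0 (1 / 2)) μ := by
  have : Nontrivial E := ⟨⟨e, 0, ne_zero_of_norm_ne_zero (by simp [he])⟩⟩
  refine integrableOn_ball_of_norm_le_rpow finrank_pos (C := 2 ^ (-b)) (α := -a) (by linarith)
    (ae_restrict_of_forall_mem measurableSet_ball fun z hz ↦ ?_)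
    (measurable_rpow_norm_mul_rpow_norm_sub a b e).aestronglyMeasurable
  have hz : 1 / 2 ≤ ‖e - z‖ := by
    have := norm_sub_norm_le e z
    have := mem_ball_zero_iff.1 hz
    linarith
  calc ‖‖z‖ ^ a * ‖e - z‖ ^ b‖ = ‖z‖ ^ a * ‖e - z‖ ^ b := Real.norm_of_nonneg (by positivity)
    _ ≤ ‖z‖ ^ a * (1 / 2) ^ b := mul_le_mul_of_nonneg_left
      (Real.rpow_le_rpow_of_nonpos (by norm_num) hz hb) (by positivity)
    _ = 2 ^ (-b) * ‖z‖ ^ (-(-a)) := by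
      rw [neg_neg, mul_comm, one_div, Real.inv_rpow zero_le_two, Real.rpow_neg zero_le_two]

/-- The reflection `z ↦ e - z` swaps the two singularities. -/
lemma integrableOn_ball_rpow_norm_mul_rpow_norm_sub (ha : a ≤ 0) (hb : -(finrank ℝ E : ℝ) < b)
    (he : ‖e‖ = 1) :
    IntegrableOn (fun z ↦ ‖z‖ ^ a * ‖e - z‖ ^ b) (ball e (1 / 2)) μ := by
  have hpre : (e - ·) ⁻¹' ball (0 : E) (1 / 2) = ball e (1 / 2) := by
    ext z; simp [dist_eq_norm, norm_sub_rev]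
  have key := integrableOn_ball_zero_rpow_norm_mul_rpow_norm_sub (μ := μ) hb ha he
  rw [← (Measure.measurePreserving_sub_left μ e).integrableOn_comp_preimage
    (Homeomorph.subLeft e).measurableEmbedding, hpre] at key
  refine key.congr_fun (fun z _ ↦ ?_) measurableSet_ball
  simp [mul_comm]

/-- Away from both singularities, `‖z‖` and `‖e - z‖` are both at least `(1 + ‖z‖) / 6`, so the
integrand is dominated by the integrable `(1 + ‖z‖) ^ (a + b)`. -/
lemma integrableOn_compl_union_ball_rpow_norm_mul_rpow_norm_sub (ha : a ≤ 0) (hb : b ≤ 0)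
    (hab : a + b < -(finrank ℝ E : ℝ)) (he : ‖e‖ = 1) :
    IntegrableOn (fun z ↦ ‖z‖ ^ a * ‖e - z‖ ^ b) (ball 0 (1 / 2) ∪ ball e (1 / 2))ᶜ μ := by
  refine ((integrable_one_add_norm (μ := μ) (r := -(a + b)) (by linarith)).div_const
    (6 ^ (a + b))).integrableOn.mono'
    (measurable_rpow_norm_mul_rpow_norm_sub a b e).aestronglyMeasurable.restrict
    (ae_restrict_of_forall_mem (measurableSet_ball.union measurableSet_ball).compl fun z hz ↦ ?_)
  simp only [mem_compl_iff, mem_union, mem_ball, dist_eq_norm, sub_zero, not_or, not_lt] at hz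
  obtain ⟨hz, hze⟩ := hz
  rw [norm_sub_rev] at hze
  have hz6 : (1 + ‖z‖) / 6 ≤ ‖z‖ := by linarith
  have hze6 : (1 + ‖z‖) / 6 ≤ ‖e - z‖ := by
    have := norm_sub_norm_le z e
    rw [norm_sub_rev z e] at this
    linarith
  have h6 : 0 < (1 + ‖z‖) / 6 := by positivity
  calc ‖‖z‖ ^ a * ‖e - z‖ ^ b‖ = ‖z‖ ^ a * ‖e - z‖ ^ b := Real.norm_of_nonneg (by positivity)
    _ ≤ ((1 + ‖z‖) / 6) ^ a * ((1 + ‖z‖) / 6) ^ b :=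
      mul_le_mul (Real.rpow_le_rpow_of_nonpos h6 hz6 ha)
        (Real.rpow_le_rpow_of_nonpos h6 hze6 hb) (by positivity) (by positivity)
    _ = (1 + ‖z‖) ^ (-(-(a + b))) / 6 ^ (a + b) := by
      rw [← Real.rpow_add h6, neg_neg, Real.div_rpow (by positivity) (by norm_num)]

theorem integrable_rpow_norm_mul_rpow_norm_sub (ha : -(finrank ℝ E : ℝ) < a)
    (hb : -(finrank ℝ E : ℝ) < b) (hab : a + b < -(finrank ℝ E : ℝ)) (he : ‖e‖ = 1) :
    Integrable (fun z ↦ ‖z‖ ^ a * ‖e - z‖ ^ b) μ := by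
  rw [← integrableOn_univ, ← union_compl_self (ball 0 (1 / 2) ∪ ball e (1 / 2))]
  exact ((integrableOn_ball_zero_rpow_norm_mul_rpow_norm_sub ha (by linarith) he).union
    (integrableOn_ball_rpow_norm_mul_rpow_norm_sub (by linarith) hb he)).union
    (integrableOn_compl_union_ball_rpow_norm_mul_rpow_norm_sub (by linarith) (by linarith) hab he)

theorem stmt12_general (n : ℕ) (α p : ℝ) (hα : 0 < α)
    (h1 : (n - α) * p < n) (h2 : (n - α) * (p + 1) > n)
    (e : EuclideanSpace ℝ (Fin n)) (he : ‖e‖ = 1) :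
    ∫⁻ z, ENNReal.ofReal (‖z‖ ^ (-(n - α) * p) * ‖e - z‖ ^ (α - n)) < ⊤ := by
  have hd : (finrank ℝ (EuclideanSpace ℝ (Fin n)) : ℝ) = n := by simp
  refine (integrable_rpow_norm_mul_rpow_norm_sub (μ := volume) ?_ ?_ ?_ he).lintegral_lt_top <;>
    rw [hd] <;> linarith

theorem stmt12 (n : ℕ) (hn : 3 ≤ n) (α p : ℝ) (hα : 0 < α) (hαn : α < n)
    (hp : 0 < p) (h1 : (n - α) * p < n) (h2 : (n - α) * (p + 1) > n)
    (e : EuclideanSpace ℝ (Fin n)) (he : ‖e‖ = 1) :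
    ∫⁻ z, ENNReal.ofReal (‖z‖ ^ (-(n - α) * p) * ‖e - z‖ ^ (α - n)) < ⊤ :=
  stmt12_general n α p hα h1 h2 e he
end
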